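/- arXiv:1903.07157 — 2 statements merged into one kernel-verified Lean document; each statement's English description precedes it below -/
import Mathlib

section
/- (Time-independence of the optimal machine policy under decomposable features; Lemma in the paper's Section on decomposable features.) Suppose the human model P̂ is one-step Markov, P̂(h_t | h^{t-1}, m^t) = P̂_t(h_t | m_t), and the reward is decomposable, r(h^T,m^T) = Σ_{t=1}^T r_t(h_t,m_t). Then the machine policy Q̂ obtained from the Y_γ backward recursion has no dependency across time: for every t and every history, Q̂(m_t | h^{t-1}, m^{t-1}) = Q̂_t(m_t), where Q̂_t(m) = exp(γ·ρ_t(m)) / Σ_{m'∈𝓜} exp(γ·ρ_t(m')) and ρ_t(m) := Σ_{h∈𝓗} P̂_t(h | m)·r_t(h, m); i.e., Q̂_t(m) ∝ exp(γ·E_{P̂}[r_t(H_t, m)]). -/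
/-! Common framework: finite-horizon human–machine interaction processes.
Times are 0-indexed: step `t : Fin T` corresponds to the paper's step `t+1`.
A human model gives conditional PMFs `P(h_t | h^{t-1}, m^t)`: the value
`p t h m a` may depend only on `h s` for `s < t`, on `m s` for `s ≤ t`, and on `a`.
A machine policy gives conditional PMFs `Q(m_t | h^{t-1}, m^{t-1})`: the value
`q t h m b` may depend only on `h s`, `m s` for `s < t`, and on `b`. -/

structure HumanModel (T : ℕ) (H M : Type*) [Fintype H] where
  p : Fin T → (Fin T → H) → (Fin T → M) → H → ℝ
  causal : ∀ (t : Fin T) (h h' : Fin T → H) (m m' : Fin T → M),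
      (∀ s, s < t → h s = h' s) → (∀ s, s ≤ t → m s = m' s) → p t h m = p t h' m'
  nonneg : ∀ t h m a, 0 ≤ p t h m a
  sum_one : ∀ t h m, ∑ a, p t h m a = 1

structure MachinePolicy (T : ℕ) (H M : Type*) [Fintype M] where
  q : Fin T → (Fin T → H) → (Fin T → M) → M → ℝ
  causal : ∀ (t : Fin T) (h h' : Fin T → H) (m m' : Fin T → M),
      (∀ s, s < t → h s = h' s) → (∀ s, s < t → m s = m' s) → q t h m = q t h' m'
  nonneg : ∀ t h m b, 0 ≤ q t h m b
  sum_one : ∀ t h m, ∑ b, q t h m b = 1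

variable {T : ℕ} {H M : Type*} [Fintype H] [Fintype M]

/-- Causally conditioned distribution of the human: `P(h^T ‖ m^T)`. -/
noncomputable def HumanModel.cc (P : HumanModel T H M) (h : Fin T → H) (m : Fin T → M) : ℝ :=
  ∏ t, P.p t h m (h t)

/-- Causally conditioned distribution of the machine: `Q(m^T ‖ h^T)`. -/
noncomputable def MachinePolicy.cc (Q : MachinePolicy T H M) (h : Fin T → H) (m : Fin T → M) : ℝ :=
  ∏ t, Q.q t h m (m t)

/-- Joint PMF `PQ(h^T, m^T)`. -/
noncomputable def jointPMF (P : HumanModel T H M) (Q : MachinePolicy T H M)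
    (h : Fin T → H) (m : Fin T → M) : ℝ :=
  P.cc h m * Q.cc h m

/-- Expectation `E_{PQ}[φ(H^T, M^T)]`. -/
noncomputable def expVal (P : HumanModel T H M) (Q : MachinePolicy T H M)
    (φ : (Fin T → H) → (Fin T → M) → ℝ) : ℝ :=
  ∑ h : Fin T → H, ∑ m : Fin T → M, jointPMF P Q h m * φ h m

/-- Causally conditioned entropy of the human, `H_{PQ}(H^T ‖ M^T)`. -/
noncomputable def humanEntropy (P : HumanModel T H M) (Q : MachinePolicy T H M) : ℝ :=
  ∑ h : Fin T → H, ∑ m : Fin T → M, jointPMF P Q h m * (- Real.log (P.cc h m))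

/-- Causally conditioned entropy of the machine, `H_{PQ}(M^T ‖ H^T)`. -/
noncomputable def machineEntropy (P : HumanModel T H M) (Q : MachinePolicy T H M) : ℝ :=
  ∑ h : Fin T → H, ∑ m : Fin T → M, jointPMF P Q h m * (- Real.log (Q.cc h m))

lemma idx_lt (T k : ℕ) [NeZero T] : T - 1 - k < T := by
  have := Nat.pos_of_ne_zero (NeZero.ne T); omega

variable [NeZero T]

/-- Backward recursion for `Y_γ(m_t | h^{t-1}, m^{t-1})`, parameterized by fuel
`k = (T-1) - t`. `Yaux P r γ k h m` is `Y_γ(m_t | h^{t-1}, m^{t-1})` at (0-indexed)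
step `t = T - 1 - k`, where the current machine action `m_t` is read off as `m t`. -/
noncomputable def Yaux (P : HumanModel T H M)
    (r : (Fin T → H) → (Fin T → M) → ℝ) (γ : ℝ) :
    ℕ → (Fin T → H) → (Fin T → M) → ℝ
  | 0, h, m =>
      Real.exp (γ * ∑ a : H, P.p ⟨T - 1, idx_lt T 0⟩ h m a *
        r (Function.update h ⟨T - 1, idx_lt T 0⟩ a) m)
  | k + 1, h, m =>
      Real.exp (∑ a : H, P.p ⟨T - 1 - (k + 1), idx_lt T (k + 1)⟩ h m a *
        Real.log (∑ b : M, Yaux P r γ k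
          (Function.update h ⟨T - 1 - (k + 1), idx_lt T (k + 1)⟩ a)
          (Function.update m ⟨T - 1 - k, idx_lt T k⟩ b)))

/-- `Y_γ(m_t | h^{t-1}, m^{t-1})` at step `t`, with `m_t = m t`. -/
noncomputable def Ycond (P : HumanModel T H M)
    (r : (Fin T → H) → (Fin T → M) → ℝ) (γ : ℝ) (t : Fin T)
    (h : Fin T → H) (m : Fin T → M) : ℝ :=
  Yaux P r γ (T - 1 - t.val) h m

/-- `Q` is the optimal machine policy `Q̂` obtained from the `Y_γ` backward recursion:
`Q̂(m_t | h^{t-1}, m^{t-1}) = Y_γ(m_t | h^{t-1}, m^{t-1}) / Y_γ(h^{t-1}, m^{t-1})`. -/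
def IsOptMachine (P : HumanModel T H M)
    (r : (Fin T → H) → (Fin T → M) → ℝ) (γ : ℝ) (Q : MachinePolicy T H M) : Prop :=
  ∀ (t : Fin T) (h : Fin T → H) (m : Fin T → M) (b : M),
    Q.q t h m b = Ycond P r γ t h (Function.update m t b) /
      ∑ b' : M, Ycond P r γ t h (Function.update m t b')

lemma sum_if_lt_succ {T : ℕ} (n : ℕ) (hn : n < T) (f : Fin T → ℝ) :
    (∑ s : Fin T, if (s : ℕ) < n + 1 then f s else 0)
      = (∑ s : Fin T, if (s : ℕ) < n then f s else 0) + f ⟨n, hn⟩ := by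
  have key : ∀ s : Fin T, (if (s : ℕ) < n + 1 then f s else 0)
      = (if (s : ℕ) < n then f s else 0) + (if s = ⟨n, hn⟩ then f s else 0) := by
    intro s
    rcases lt_trichotomy (s : ℕ) n with hlt | heq | hgt
    · have h1 : (s : ℕ) < n + 1 := by omega
      have h2 : s ≠ (⟨n, hn⟩ : Fin T) := by simp [Fin.ext_iff]; omega
      simp [hlt, h1, h2]
    · have h2 : s = (⟨n, hn⟩ : Fin T) := by simp [Fin.ext_iff]; omega
      simp [heq, h2]
    · have h1 : ¬ (s : ℕ) < n + 1 := by omega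
      have h2 : s ≠ (⟨n, hn⟩ : Fin T) := by simp [Fin.ext_iff]; omega
      simp [h1, h2, Nat.lt_asymm hgt]
  rw [Finset.sum_congr rfl (fun s _ => key s), Finset.sum_add_distrib,
    Finset.sum_ite_eq' Finset.univ (⟨n, hn⟩ : Fin T) f]
  simp

lemma sum_if_gt_succ {T : ℕ} (n : ℕ) (hn : n + 1 < T) (f : Fin T → ℝ) :
    (∑ s : Fin T, if n < (s : ℕ) then f s else 0)
      = (∑ s : Fin T, if n + 1 < (s : ℕ) then f s else 0) + f ⟨n + 1, hn⟩ := by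
  have key : ∀ s : Fin T, (if n < (s : ℕ) then f s else 0)
      = (if n + 1 < (s : ℕ) then f s else 0) + (if s = ⟨n + 1, hn⟩ then f s else 0) := by
    intro s
    rcases lt_trichotomy (s : ℕ) (n + 1) with hlt | heq | hgt
    · have h1 : ¬ n < (s : ℕ) := by omega
      have h1' : ¬ n + 1 < (s : ℕ) := by omega
      have h2 : s ≠ (⟨n + 1, hn⟩ : Fin T) := by simp [Fin.ext_iff]; omega
      simp [h1, h1', h2]
    · have h2 : s = (⟨n + 1, hn⟩ : Fin T) := by simp [Fin.ext_iff]; omega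
      have : n < (s : ℕ) := by omega
      simp [this, h2, heq]
    · have h2 : s ≠ (⟨n + 1, hn⟩ : Fin T) := by simp [Fin.ext_iff]; omega
      have h1 : n < (s : ℕ) := by omega
      simp [h1, hgt, h2]
  rw [Finset.sum_congr rfl (fun s _ => key s), Finset.sum_add_distrib,
    Finset.sum_ite_eq' Finset.univ (⟨n + 1, hn⟩ : Fin T) f]
  simp

/-- Closed form for `Yaux` under a Markov human model and decomposable reward. -/
lemma Yaux_closed_form [NeZero T] [Nonempty M]
    (Phat : HumanModel T H M)
    (Pt : Fin T → M → H → ℝ)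
    (hPM : ∀ (t : Fin T) (h : Fin T → H) (m : Fin T → M) (a : H),
      Phat.p t h m a = Pt t (m t) a)
    (hPt1 : ∀ (t : Fin T) (b : M), ∑ a, Pt t b a = 1)
    (rt : Fin T → H → M → ℝ)
    (r : (Fin T → H) → (Fin T → M) → ℝ)
    (hr : ∀ h m, r h m = ∑ t, rt t (h t) (m t))
    (γ : ℝ) :
    ∀ k, k ≤ T - 1 → ∀ (h : Fin T → H) (m : Fin T → M),
      Yaux Phat r γ k h m =
        Real.exp (γ * ((∑ s : Fin T, if (s : ℕ) < T - 1 - k then rt s (h s) (m s) else 0)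
            + ∑ a : H, Pt ⟨T - 1 - k, idx_lt T k⟩ (m ⟨T - 1 - k, idx_lt T k⟩) a *
                rt ⟨T - 1 - k, idx_lt T k⟩ a (m ⟨T - 1 - k, idx_lt T k⟩))
          + ∑ s : Fin T, if T - 1 - k < (s : ℕ) then
              Real.log (∑ b : M, Real.exp (γ * ∑ a : H, Pt s b a * rt s a b)) else 0) := by
  intro k
  induction k with
  | zero =>
    intro _ h m
    have hT : T - 1 + 1 = T := by
      have := Nat.pos_of_ne_zero (NeZero.ne T); omega
    show Real.exp (γ * ∑ a : H, Phat.p ⟨T - 1, idx_lt T 0⟩ h m a *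
        r (Function.update h ⟨T - 1, idx_lt T 0⟩ a) m)
      = Real.exp (γ * ((∑ s : Fin T, if (s : ℕ) < T - 1 then rt s (h s) (m s) else 0)
          + ∑ a : H, Pt ⟨T - 1, idx_lt T 0⟩ (m ⟨T - 1, idx_lt T 0⟩) a *
              rt ⟨T - 1, idx_lt T 0⟩ a (m ⟨T - 1, idx_lt T 0⟩))
        + ∑ s : Fin T, if T - 1 < (s : ℕ) then
            Real.log (∑ b : M, Real.exp (γ * ∑ a : H, Pt s b a * rt s a b)) else 0)
    set t : Fin T := ⟨T - 1, idx_lt T 0⟩ with ht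
    have htval : (t : ℕ) = T - 1 := rfl
    have hrew : ∀ a : H, r (Function.update h t a) m
        = (∑ s : Fin T, if (s : ℕ) < T - 1 then rt s (h s) (m s) else 0) + rt t a (m t) := by
      intro a
      rw [hr]
      have e1 : (∑ s : Fin T, rt s (Function.update h t a s) (m s))
          = ∑ s : Fin T, if (s : ℕ) < T - 1 + 1 then
              rt s (Function.update h t a s) (m s) else 0 :=
        Finset.sum_congr rfl (fun s _ => by
          have hsl := s.isLt
          have : (s : ℕ) < T - 1 + 1 := by omega
          simp [this])
      rw [e1, sum_if_lt_succ (T - 1) (idx_lt T 0)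
        (fun s => rt s (Function.update h t a s) (m s))]
      congr 1
      · apply Finset.sum_congr rfl
        intro s _
        by_cases hs : (s : ℕ) < T - 1
        · have hne : s ≠ t := by
            intro e; rw [e] at hs; omega
          simp [hs, Function.update_of_ne hne]
        · simp [hs]
      · show rt t (Function.update h t a t) (m t) = rt t a (m t)
        rw [Function.update_self]
    have htail : (∑ s : Fin T, if T - 1 < (s : ℕ) then
        Real.log (∑ b : M, Real.exp (γ * ∑ a : H, Pt s b a * rt s a b)) else 0) = 0 :=
      Finset.sum_eq_zero (fun s _ => by
        have hsl := s.isLt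
        exact if_neg (by omega))
    rw [htail, add_zero]
    congr 1
    have e2 : (∑ a : H, Phat.p t h m a * r (Function.update h t a) m)
        = ∑ a : H, Pt t (m t) a *
            ((∑ s : Fin T, if (s : ℕ) < T - 1 then rt s (h s) (m s) else 0) + rt t a (m t)) :=
      Finset.sum_congr rfl (fun a _ => by rw [hPM, hrew])
    rw [e2]
    rw [Finset.sum_congr rfl (fun a _ => mul_add (Pt t (m t) a) _ (rt t a (m t))),
      Finset.sum_add_distrib, ← Finset.sum_mul, hPt1, one_mul]
  | succ k ih =>
    intro hk h m
    have hk' : k ≤ T - 1 := by omega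
    have hT : 0 < T := Nat.pos_of_ne_zero (NeZero.ne T)
    set t : Fin T := ⟨T - 1 - (k + 1), idx_lt T (k + 1)⟩ with ht
    set u : Fin T := ⟨T - 1 - k, idx_lt T k⟩ with hu
    have htv : (t : ℕ) = T - 1 - (k + 1) := rfl
    have huvv : (u : ℕ) = T - 1 - k := rfl
    have huv : (u : ℕ) = (t : ℕ) + 1 := by omega
    set Z : Fin T → ℝ := fun s => ∑ b : M, Real.exp (γ * ∑ a : H, Pt s b a * rt s a b) with hZ
    have hZpos : ∀ s, 0 < Z s := fun s =>
      Finset.sum_pos (fun b _ => Real.exp_pos _) Finset.univ_nonempty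
    set S0 : ℝ := ∑ s : Fin T, if (s : ℕ) < (t : ℕ) then rt s (h s) (m s) else 0 with hS0
    set S2 : ℝ := ∑ s : Fin T, if (u : ℕ) < (s : ℕ) then Real.log (Z s) else 0 with hS2
    have hinner : ∀ a : H,
        (∑ b : M, Yaux Phat r γ k (Function.update h t a) (Function.update m u b))
        = Real.exp (γ * (S0 + rt t a (m t)) + S2) * Z u := by
      intro a
      have step : ∀ b : M, Yaux Phat r γ k (Function.update h t a) (Function.update m u b)
          = Real.exp (γ * (S0 + rt t a (m t)) + S2) *
              Real.exp (γ * ∑ a' : H, Pt u b a' * rt u a' b) := by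
        intro b
        rw [ih hk' (Function.update h t a) (Function.update m u b)]
        have hmu : Function.update m u b u = b := Function.update_self u b m
        have hS1 : (∑ s : Fin T, if (s : ℕ) < T - 1 - k then
              rt s (Function.update h t a s) (Function.update m u b s) else 0)
            = S0 + rt t a (m t) := by
          have e1 : (∑ s : Fin T, if (s : ℕ) < T - 1 - k then
                rt s (Function.update h t a s) (Function.update m u b s) else 0)
              = ∑ s : Fin T, if (s : ℕ) < (t : ℕ) + 1 then
                  rt s (Function.update h t a s) (Function.update m u b s) else 0 :=
            Finset.sum_congr rfl (fun s _ => if_congr (by omega) rfl rfl)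
          rw [e1, sum_if_lt_succ (t : ℕ) t.isLt
            (fun s => rt s (Function.update h t a s) (Function.update m u b s))]
          congr 1
          · apply Finset.sum_congr rfl
            intro s _
            by_cases hs : (s : ℕ) < (t : ℕ)
            · have hne1 : s ≠ t := by intro e; rw [e] at hs; omega
              have hne2 : s ≠ u := by intro e; rw [e] at hs; omega
              simp [hs, Function.update_of_ne hne1, Function.update_of_ne hne2]
            · simp [hs]
          · show rt ⟨(t : ℕ), t.isLt⟩ (Function.update h t a ⟨(t : ℕ), t.isLt⟩)
                (Function.update m u b ⟨(t : ℕ), t.isLt⟩) = rt t a (m t)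
            have het : (⟨(t : ℕ), t.isLt⟩ : Fin T) = t := rfl
            have hne : t ≠ u := by intro e; rw [e] at huv; omega
            rw [het, Function.update_self, Function.update_of_ne hne]
        have hmid : (∑ a' : H, Pt u (Function.update m u b u) a' *
              rt u a' (Function.update m u b u))
            = ∑ a' : H, Pt u b a' * rt u a' b := by rw [hmu]
        rw [hS1, hmid, ← Real.exp_add]
        congr 1
        ring
      rw [Finset.sum_congr rfl (fun b _ => step b), ← Finset.mul_sum]
    have hlog : ∀ a : H,
        Real.log (∑ b : M, Yaux Phat r γ k (Function.update h t a) (Function.update m u b))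
        = γ * (S0 + rt t a (m t)) + S2 + Real.log (Z u) := by
      intro a
      rw [hinner a, Real.log_mul (Real.exp_ne_zero _) (ne_of_gt (hZpos u)), Real.log_exp]
    show Real.exp (∑ a : H, Phat.p t h m a *
        Real.log (∑ b : M, Yaux Phat r γ k (Function.update h t a) (Function.update m u b))) = _
    congr 1
    have e2 : (∑ a : H, Phat.p t h m a *
        Real.log (∑ b : M, Yaux Phat r γ k (Function.update h t a) (Function.update m u b)))
        = ∑ a : H, Pt t (m t) a * (γ * (S0 + rt t a (m t)) + S2 + Real.log (Z u)) :=
      Finset.sum_congr rfl (fun a _ => by rw [hPM, hlog])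
    rw [e2]
    have expand : ∀ a : H, Pt t (m t) a * (γ * (S0 + rt t a (m t)) + S2 + Real.log (Z u))
        = Pt t (m t) a * (γ * S0 + S2 + Real.log (Z u))
          + γ * (Pt t (m t) a * rt t a (m t)) := fun a => by ring
    rw [Finset.sum_congr rfl (fun a _ => expand a), Finset.sum_add_distrib,
      ← Finset.sum_mul, hPt1, one_mul, ← Finset.mul_sum]
    have htail : (∑ s : Fin T, if T - 1 - (k + 1) < (s : ℕ) then Real.log (Z s) else 0)
        = S2 + Real.log (Z u) := by
      have e3 : (∑ s : Fin T, if T - 1 - (k + 1) < (s : ℕ) then Real.log (Z s) else 0)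
          = ∑ s : Fin T, if (t : ℕ) < (s : ℕ) then Real.log (Z s) else 0 := rfl
      have hu1 : (t : ℕ) + 1 < T := by rw [← huv]; exact u.isLt
      rw [e3, sum_if_gt_succ (t : ℕ) hu1 (fun s => Real.log (Z s))]
      congr 1
      · exact Finset.sum_congr rfl (fun s _ => if_congr (by omega) rfl rfl)
      · have : (⟨(t : ℕ) + 1, hu1⟩ : Fin T) = u := Fin.ext huv.symm
        rw [this]
    rw [show (∑ s : Fin T, if T - 1 - (k + 1) < (s : ℕ) then
        Real.log (∑ b : M, Real.exp (γ * ∑ a : H, Pt s b a * rt s a b)) else 0)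
      = ∑ s : Fin T, if T - 1 - (k + 1) < (s : ℕ) then Real.log (Z s) else 0 from rfl, htail]
    ring

/-- time-independence of the optimal machine policy under decomposable
features: if the human model is one-step Markov, `P̂(h_t | h^{t-1}, m^t) = P̂_t(h_t | m_t)`,
and the reward is decomposable, `r = Σ_t r_t(h_t,m_t)`, then the optimal machine policy has
no dependency across time: `Q̂(m_t | h^{t-1}, m^{t-1}) = Q̂_t(m_t)` with
`Q̂_t(m) = exp(γ·ρ_t(m)) / Σ_{m'} exp(γ·ρ_t(m'))`, where `ρ_t(m) = Σ_h P̂_t(h|m)·r_t(h,m)`. -/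
theorem optMachine_time_independent [Nonempty H] [Nonempty M]
    (Phat : HumanModel T H M)
    (Pt : Fin T → M → H → ℝ)
    (hPM : ∀ (t : Fin T) (h : Fin T → H) (m : Fin T → M) (a : H),
      Phat.p t h m a = Pt t (m t) a)
    (rt : Fin T → H → M → ℝ)
    (r : (Fin T → H) → (Fin T → M) → ℝ)
    (hr : ∀ h m, r h m = ∑ t, rt t (h t) (m t))
    (γ : ℝ) (hγ : 0 < γ)
    (Qhat : MachinePolicy T H M) (hQhat : IsOptMachine Phat r γ Qhat) :
    ∀ (t : Fin T) (h : Fin T → H) (m : Fin T → M) (b : M),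
      Qhat.q t h m b =
        Real.exp (γ * ∑ a : H, Pt t b a * rt t a b) /
          ∑ b' : M, Real.exp (γ * ∑ a : H, Pt t b' a * rt t a b') := by
  intro t h m b
  have hPt1 : ∀ (s : Fin T) (c : M), ∑ a, Pt s c a = 1 := by
    intro s c
    have := Phat.sum_one s (Classical.arbitrary _) (fun _ => c)
    simpa [hPM] using this
  have hform := Yaux_closed_form Phat Pt hPM hPt1 rt r hr γ (T - 1 - (t : ℕ))
    (by omega) h
  have hkey : T - 1 - (T - 1 - (t : ℕ)) = (t : ℕ) := by
    have := t.isLt; omega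
  have hfin : (⟨T - 1 - (T - 1 - (t : ℕ)), idx_lt T (T - 1 - (t : ℕ))⟩ : Fin T) = t :=
    Fin.ext hkey
  have hY : ∀ c : M, Ycond Phat r γ t h (Function.update m t c)
      = Real.exp (γ * ((∑ s : Fin T, if (s : ℕ) < (t : ℕ) then rt s (h s) (m s) else 0)
            + ∑ a : H, Pt t c a * rt t a c)
          + ∑ s : Fin T, if (t : ℕ) < (s : ℕ) then
              Real.log (∑ b' : M, Real.exp (γ * ∑ a : H, Pt s b' a * rt s a b')) else 0) := by
    intro c
    show Yaux Phat r γ (T - 1 - (t : ℕ)) h (Function.update m t c) = _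
    rw [hform (Function.update m t c), hfin, hkey, Function.update_self]
    have e0 : (∑ s : Fin T, if (s : ℕ) < (t : ℕ) then
          rt s (h s) (Function.update m t c s) else 0)
        = ∑ s : Fin T, if (s : ℕ) < (t : ℕ) then rt s (h s) (m s) else 0 := by
      apply Finset.sum_congr rfl
      intro s _
      by_cases hs : (s : ℕ) < (t : ℕ)
      · have hne : s ≠ t := by intro e; rw [e] at hs; omega
        simp [hs, Function.update_of_ne hne]
      · simp [hs]
    rw [e0]
  set A : ℝ := γ * (∑ s : Fin T, if (s : ℕ) < (t : ℕ) then rt s (h s) (m s) else 0)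
      + ∑ s : Fin T, if (t : ℕ) < (s : ℕ) then
          Real.log (∑ b' : M, Real.exp (γ * ∑ a : H, Pt s b' a * rt s a b')) else 0 with hA
  have hY' : ∀ c : M, Ycond Phat r γ t h (Function.update m t c)
      = Real.exp A * Real.exp (γ * ∑ a : H, Pt t c a * rt t a c) := by
    intro c
    rw [hY c, ← Real.exp_add, hA]
    congr 1
    ring
  rw [hQhat t h m b]
  rw [hY' b, Finset.sum_congr rfl (fun c _ => hY' c), ← Finset.mul_sum,
    mul_div_mul_left _ _ (Real.exp_ne_zero A)]
end

section
/- (Explicit form of the Y_γ recursion under decomposable rewards; key identity in the proof of the paper's time-independence lemma.) Suppose the human model P̂ is one-step Markov, P̂(h_t | h^{t-1}, m^t) = P̂_t(h_t | m_t), and the reward is decomposable, r(h^T,m^T) = Σ_{t=1}^T r_t(h_t,m_t). Set ρ_τ(m) := Σ_{h∈𝓗} P̂_τ(h | m)·r_τ(h, m) and Y_{γ,τ} := Σ_{m∈𝓜} exp(γ·ρ_τ(m)). Then for every t = 1,…,T and every history, Y_γ(m_t | h^{t-1}, m^{t-1}) = (∏_{τ=t+1}^T Y_{γ,τ}) ·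 exp(γ·Σ_{τ=1}^{t-1} r_τ(h_τ, m_τ)) · exp(γ·ρ_t(m_t)). -/
variable {T : ℕ} {H M : Type*} [Fintype H] [Fintype M]

variable [NeZero T]

set_option maxHeartbeats 1000000 in
lemma Yaux_explicit_decomposable [Nonempty H] [Nonempty M]
    (Phat : HumanModel T H M)
    (Pt : Fin T → M → H → ℝ)
    (hPM : ∀ (t : Fin T) (h : Fin T → H) (m : Fin T → M) (a : H),
      Phat.p t h m a = Pt t (m t) a)
    (rt : Fin T → H → M → ℝ)
    (r : (Fin T → H) → (Fin T → M) → ℝ)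
    (hr : ∀ h m, r h m = ∑ t, rt t (h t) (m t))
    (γ : ℝ) :
    ∀ (k : ℕ), k ≤ T - 1 → ∀ (h : Fin T → H) (m : Fin T → M),
      Yaux Phat r γ k h m =
        (∏ τ ∈ Finset.univ.filter (fun τ => (⟨T - 1 - k, idx_lt T k⟩ : Fin T) < τ),
            ∑ b : M, Real.exp (γ * ∑ a : H, Pt τ b a * rt τ a b)) *
          Real.exp (γ * ∑ τ ∈ Finset.univ.filter
            (fun τ => τ < (⟨T - 1 - k, idx_lt T k⟩ : Fin T)), rt τ (h τ) (m τ)) *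
          Real.exp (γ * ∑ a : H, Pt (⟨T - 1 - k, idx_lt T k⟩ : Fin T) (m (⟨T - 1 - k, idx_lt T k⟩ : Fin T)) a *
            rt (⟨T - 1 - k, idx_lt T k⟩ : Fin T) a (m (⟨T - 1 - k, idx_lt T k⟩ : Fin T))) := by
  intro k
  induction k with
  | zero =>
    intro _ h m
    set t : Fin T := ⟨T - 1, idx_lt T 0⟩ with ht
    have hsum1 : ∑ a : H, Pt t (m t) a = 1 := by
      rw [← Phat.sum_one t h m]
      exact Finset.sum_congr rfl fun a _ => (hPM t h m a).symm
    have hr' : ∀ a : H, r (Function.update h t a) m =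
        rt t a (m t) + ∑ τ ∈ Finset.univ.erase t, rt τ (h τ) (m τ) := by
      intro a
      rw [hr, ← Finset.add_sum_erase _ _ (Finset.mem_univ t)]
      congr 1
      · rw [Function.update_self]
      · exact Finset.sum_congr rfl fun τ hτ => by
          rw [Function.update_of_ne (Finset.mem_erase.mp hτ).1]
    have hfe : Finset.univ.filter (fun τ => t < τ) = (∅ : Finset (Fin T)) := by
      apply Finset.filter_eq_empty_iff.mpr
      intro τ _
      have hτ := τ.isLt
      simp only [ht, not_lt, Fin.le_def]
      omega
    have her : Finset.univ.erase t = Finset.univ.filter (fun τ => τ < t) := by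
      ext τ
      have hτ := τ.isLt
      simp only [Finset.mem_erase, Finset.mem_univ, Finset.mem_filter, true_and, and_true,
        ne_eq, Fin.ext_iff, Fin.lt_def, ht]
      omega
    simp only [Nat.sub_zero]
    simp only [Yaux, ← ht, hfe, Finset.prod_empty, one_mul, hPM]
    rw [← Real.exp_add, ← mul_add]
    congr 1
    rw [← her]
    simp only [hr', mul_add, Finset.sum_add_distrib, ← Finset.sum_mul, hsum1, one_mul]
    ring
  | succ k ih =>
    intro hk h m
    have hk' : k ≤ T - 1 := Nat.le_of_succ_le hk
    set t : Fin T := ⟨T - 1 - (k + 1), idx_lt T (k + 1)⟩ with ht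
    set t' : Fin T := ⟨T - 1 - k, idx_lt T k⟩ with ht'
    have htv : t'.val = t.val + 1 := by simp [ht, ht']; omega
    have hsum1 : ∑ a : H, Pt t (m t) a = 1 := by
      rw [← Phat.sum_one t h m]
      exact Finset.sum_congr rfl fun a _ => (hPM t h m a).symm
    -- constants
    set C : ℝ := ∏ τ ∈ Finset.univ.filter (fun τ => t' < τ),
        ∑ b : M, Real.exp (γ * ∑ a : H, Pt τ b a * rt τ a b) with hC
    set Z : ℝ := ∑ b : M, Real.exp (γ * ∑ a : H, Pt t' b a * rt t' a b) with hZ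
    set S : ℝ := ∑ τ ∈ Finset.univ.filter (fun τ => τ < t), rt τ (h τ) (m τ) with hS
    have hCpos : 0 < C := Finset.prod_pos fun τ _ =>
      Finset.sum_pos (fun b _ => Real.exp_pos _) Finset.univ_nonempty
    have hZpos : 0 < Z := Finset.sum_pos (fun b _ => Real.exp_pos _) Finset.univ_nonempty
    -- filter facts
    have hflt : Finset.univ.filter (fun τ : Fin T => τ < t') =
        insert t (Finset.univ.filter (fun τ => τ < t)) := by
      ext τ
      have hτ := τ.isLt
      simp only [Finset.mem_filter, Finset.mem_univ, true_and, Finset.mem_insert,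
        Fin.lt_def, Fin.ext_iff, ht, ht']
      omega
    have htnot : t ∉ Finset.univ.filter (fun τ : Fin T => τ < t) := by
      simp
    have hfgt : Finset.univ.filter (fun τ : Fin T => t < τ) =
        insert t' (Finset.univ.filter (fun τ => t' < τ)) := by
      ext τ
      have hτ := τ.isLt
      simp only [Finset.mem_filter, Finset.mem_univ, true_and, Finset.mem_insert,
        Fin.lt_def, Fin.ext_iff, ht, ht']
      omega
    have ht'not : t' ∉ Finset.univ.filter (fun τ : Fin T => t' < τ) := by
      simp
    -- inner sum over b
    have hinner : ∀ a : H,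
        (∑ b : M, Yaux Phat r γ k (Function.update h t a) (Function.update m t' b))
        = C * Z * Real.exp (γ * S) * Real.exp (γ * rt t a (m t)) := by
      intro a
      have := fun b : M => ih hk' (Function.update h t a) (Function.update m t' b)
      calc (∑ b : M, Yaux Phat r γ k (Function.update h t a) (Function.update m t' b))
          = ∑ b : M, C * Real.exp (γ * (rt t a (m t) + S)) *
              Real.exp (γ * ∑ a' : H, Pt t' b a' * rt t' a' b) := by
            refine Finset.sum_congr rfl fun b _ => ?_
            rw [this b]
            congr 2
            · -- middle exp term
              congr 2
              rw [hflt, Finset.sum_insert htnot]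
              congr 1
              · rw [Function.update_self, Function.update_of_ne]
                exact fun hc => by
                  have := congrArg Fin.val hc; simp [ht, ht'] at this; omega
              · rw [hS]
                refine Finset.sum_congr rfl fun τ hτ => ?_
                have hτt := Fin.lt_def.mp (Finset.mem_filter.mp hτ).2
                rw [Function.update_of_ne, Function.update_of_ne]
                · exact fun hc => by
                    have := congrArg Fin.val hc; omega
                · exact ne_of_lt (Finset.mem_filter.mp hτ).2
            · -- last exp term: (update m t' b) t' = b
              congr 1
              refine Finset.sum_congr rfl fun a' _ => ?_
              rw [Function.update_self]
        _ = C * Z * Real.exp (γ * S) * Real.exp (γ * rt t a (m t)) := by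
            rw [← Finset.mul_sum, ← hZ, mul_add, Real.exp_add]
            ring
    simp only [Yaux, ← ht, ← ht', hPM, hinner]
    have hCZ : (0 : ℝ) < C * Z := mul_pos hCpos hZpos
    have hlog : ∀ a : H,
        Real.log (C * Z * Real.exp (γ * S) * Real.exp (γ * rt t a (m t))) =
        Real.log (C * Z) + γ * S + γ * rt t a (m t) := by
      intro a
      rw [Real.log_mul (ne_of_gt (mul_pos hCZ (Real.exp_pos _))) (Real.exp_ne_zero _),
        Real.log_mul (ne_of_gt hCZ) (Real.exp_ne_zero _),
        Real.log_exp, Real.log_exp]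
    simp only [hlog]
    have hsum : ∑ a : H, Pt t (m t) a * (Real.log (C * Z) + γ * S + γ * rt t a (m t)) =
        Real.log (C * Z) + γ * S + γ * ∑ a : H, Pt t (m t) a * rt t a (m t) := by
      simp only [mul_add, Finset.sum_add_distrib, ← Finset.sum_mul, hsum1, one_mul,
        Finset.mul_sum]
      congr 1
      exact Finset.sum_congr rfl fun a _ => by ring
    rw [hsum, Real.exp_add, Real.exp_add, Real.exp_log hCZ, hfgt,
      Finset.prod_insert ht'not, ← hC, ← hZ]
    ring

/-- explicit form of the `Y_γ` recursion under decomposable rewards: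
if `P̂` is one-step Markov and `r = Σ_t r_t(h_t,m_t)`, then with
`ρ_τ(m) = Σ_h P̂_τ(h|m)·r_τ(h,m)` and `Y_{γ,τ} = Σ_m exp(γ·ρ_τ(m))`, for every step `t`
and every history,
`Y_γ(m_t | h^{t-1}, m^{t-1}) = (∏_{τ>t} Y_{γ,τ}) · exp(γ·Σ_{τ<t} r_τ(h_τ,m_τ)) · exp(γ·ρ_t(m_t))`. -/
theorem Ycond_explicit_decomposable [Nonempty H] [Nonempty M]
    (Phat : HumanModel T H M)
    (Pt : Fin T → M → H → ℝ)
    (hPM : ∀ (t : Fin T) (h : Fin T → H) (m : Fin T → M) (a : H),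
      Phat.p t h m a = Pt t (m t) a)
    (rt : Fin T → H → M → ℝ)
    (r : (Fin T → H) → (Fin T → M) → ℝ)
    (hr : ∀ h m, r h m = ∑ t, rt t (h t) (m t))
    (γ : ℝ) (hγ : 0 < γ) :
    ∀ (t : Fin T) (h : Fin T → H) (m : Fin T → M),
      Ycond Phat r γ t h m =
        (∏ τ ∈ Finset.univ.filter (fun τ => t < τ),
            ∑ b : M, Real.exp (γ * ∑ a : H, Pt τ b a * rt τ a b)) *
          Real.exp (γ * ∑ τ ∈ Finset.univ.filter (fun τ => τ < t), rt τ (h τ) (m τ)) *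
          Real.exp (γ * ∑ a : H, Pt t (m t) a * rt t a (m t)) := by
  intro t h m
  have htle : t.val ≤ T - 1 := by omega
  have hte : (⟨T - 1 - (T - 1 - t.val), idx_lt T (T - 1 - t.val)⟩ : Fin T) = t := by
    apply Fin.ext; simp; omega
  have := Yaux_explicit_decomposable Phat Pt hPM rt r hr γ (T - 1 - t.val) (by omega) h m
  rw [hte] at this
  exact this
end
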